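/- arXiv:1712.01389 — 3 statements merged into one kernel-verified Lean document; each statement's English description precedes it below -/
import Mathlib

section
/- For every fixed λ ∈ [1,∞) and τ = e^{iθ} ∈ T, the moving average functional δ_{λ,τ} is not multiplicative on the algebra of even trigonometric polynomials: there exists k ∈ ℕ such that, with φ(e^{ix}) = e^{ikx} + e^{−ikx}, one has δ_{λ,τ}(φ²) − δ_{λ,τ}(φ)² > 1. -/
open MeasureTheory Real

noncomputable section

/-- The moving average `δ_{λ,τ}(a) = (λ/2π) ∫_{θ-π/λ}^{θ+π/λ} a(e^{ix}) dx`, `τ = e^{iθ}`. -/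
def movAvg (a : ℝ → ℂ) (lam θ : ℝ) : ℂ :=
  (lam / (2 * π)) * ∫ x in (θ - π / lam)..(θ + π / lam), a x

/-- The even trigonometric "monomial" `φ(e^{ix}) = e^{ikx} + e^{-ikx}`. -/
def phiK (k : ℕ) : ℝ → ℂ := fun x =>
  Complex.exp (Complex.I * k * x) + Complex.exp (-(Complex.I * k * x))

lemma phiK_eq (k : ℕ) (x : ℝ) : phiK k x = ((2 * Real.cos (k * x) : ℝ) : ℂ) := by
  unfold phiK
  rw [show Complex.I * (k : ℂ) * (x : ℂ) = (((k : ℝ) * x : ℝ) : ℂ) * Complex.I by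
    push_cast; ring]
  rw [show -((((k : ℝ) * x : ℝ) : ℂ) * Complex.I)
      = ((-((k : ℝ) * x) : ℝ) : ℂ) * Complex.I by push_cast; ring]
  rw [Complex.exp_mul_I, Complex.exp_mul_I]
  push_cast
  simp only [Complex.cos_neg, Complex.sin_neg, Complex.ofReal_cos]
  push_cast
  ring

lemma integ_cos (m a b : ℝ) (hm : m ≠ 0) :
    ∫ x in a..b, 2 * Real.cos (m * x) = (2 / m) * (Real.sin (m * b) - Real.sin (m * a)) := by
  rw [intervalIntegral.integral_const_mul]
  rw [intervalIntegral.integral_comp_mul_left Real.cos hm]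
  rw [integral_cos]
  rw [smul_eq_mul]
  ring

set_option maxHeartbeats 1000000 in
/-- For every fixed `λ ∈ [1,∞)` and `τ = e^{iθ} ∈ T`, the moving average functional
`δ_{λ,τ}` is not multiplicative on even trigonometric polynomials: there is `k ∈ ℕ`
such that, with `φ(e^{ix}) = e^{ikx} + e^{-ikx}`, one has
`δ_{λ,τ}(φ²) - δ_{λ,τ}(φ)² > 1` (the left-hand side being a real number). -/
theorem movAvg_not_multiplicative (lam θ : ℝ) (hlam : 1 ≤ lam) :
    ∃ k : ℕ, ∃ r : ℝ, 1 < r ∧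
      movAvg (phiK k * phiK k) lam θ - (movAvg (phiK k) lam θ) ^ 2 = (r : ℂ) := by
  have hlam0 : (0:ℝ) < lam := lt_of_lt_of_le one_pos hlam
  have hpi : (0:ℝ) < π := Real.pi_pos
  obtain ⟨k, hkge⟩ : ∃ k : ℕ, lam ≤ (k : ℝ) := ⟨⌈lam⌉₊, Nat.le_ceil lam⟩
  have hk0 : (0:ℝ) < (k:ℝ) := lt_of_lt_of_le hlam0 hkge
  have hkne : (k:ℝ) ≠ 0 := ne_of_gt hk0
  set a : ℝ := θ - π / lam with ha
  set b : ℝ := θ + π / lam with hb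
  set S : ℝ → ℝ := fun m => (lam / (2 * π)) * ((2 / m) * (Real.sin (m * b) - Real.sin (m * a)))
    with hS
  have hmov1 : movAvg (phiK k) lam θ = ((S k : ℝ) : ℂ) := by
    unfold movAvg
    rw [← ha, ← hb]
    have h1 : (∫ x in a..b, phiK k x) = ((∫ x in a..b, 2 * Real.cos ((k:ℝ) * x) : ℝ) : ℂ) := by
      rw [← intervalIntegral.integral_ofReal]
      exact intervalIntegral.integral_congr (fun x _ => phiK_eq k x)
    rw [h1, integ_cos _ _ _ hkne]
    simp only [hS]
    push_cast
    ring
  have hsq : ∀ x : ℝ, (phiK k * phiK k) x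
      = ((2 * Real.cos ((2 * (k:ℝ)) * x) + 2 : ℝ) : ℂ) := by
    intro x
    have h0 : (phiK k * phiK k) x = phiK k x * phiK k x := rfl
    have hre : (2 * Real.cos ((k:ℝ) * x)) * (2 * Real.cos ((k:ℝ) * x))
        = 2 * Real.cos ((2 * (k:ℝ)) * x) + 2 := by
      rw [show (2 * (k:ℝ)) * x = 2 * ((k:ℝ) * x) by ring]
      nlinarith [Real.cos_sq ((k:ℝ) * x)]
    rw [h0, phiK_eq, ← Complex.ofReal_mul, hre]
  have h2kne : (2 * (k:ℝ)) ≠ 0 := by positivity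
  have hmov2 : movAvg (phiK k * phiK k) lam θ = ((S (2 * k) + 2 : ℝ) : ℂ) := by
    unfold movAvg
    rw [← ha, ← hb]
    have h1 : (∫ x in a..b, (phiK k * phiK k) x)
        = ((∫ x in a..b, (2 * Real.cos ((2 * (k:ℝ)) * x) + 2) : ℝ) : ℂ) := by
      rw [← intervalIntegral.integral_ofReal]
      exact intervalIntegral.integral_congr (fun x _ => hsq x)
    rw [h1]
    have hint : (∫ x in a..b, (2 * Real.cos ((2 * (k:ℝ)) * x) + 2))
        = (2 / (2 * (k:ℝ))) * (Real.sin ((2 * (k:ℝ)) * b) - Real.sin ((2 * (k:ℝ)) * a))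
          + 2 * (b - a) := by
      rw [intervalIntegral.integral_add]
      · rw [integ_cos _ _ _ h2kne, intervalIntegral.integral_const, smul_eq_mul]
        ring
      · exact (Continuous.intervalIntegrable (by continuity) a b)
      · exact intervalIntegrable_const
    rw [hint]
    have hba : b - a = 2 * π / lam := by rw [ha, hb]; ring
    rw [hba]
    rw [show ((lam:ℂ)/(2*(π:ℂ))) = ((lam/(2*π) : ℝ) : ℂ) by push_cast; ring,
       ← Complex.ofReal_mul]
    rw [show lam/(2*π) * (2 / (2 * (k:ℝ)) * (Real.sin (2 * (k:ℝ) * b) - Real.sin (2 * (k:ℝ) * a)) + 2 * (2 * π / lam)) = S (2 * (k:ℝ)) + 2 by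
      simp only [hS]; field_simp]
  have key : (1:ℝ)/π + (2/π)^2 < 1 := by
    have h3 : (3:ℝ) < π := Real.pi_gt_three
    have h1 : (1:ℝ)/π < 1/3 := by
      rw [div_lt_div_iff₀ hpi (by norm_num)]; linarith
    have h2 : (2:ℝ)/π < 2/3 := by
      rw [div_lt_div_iff₀ hpi (by norm_num)]; linarith
    have h2' : ((2:ℝ)/π)^2 < 4/9 := by
      have hp : (0:ℝ) < 2/π := by positivity
      nlinarith
    linarith
  have hbnd : ∀ m : ℝ, 0 < m → |S m| ≤ 2 * lam / (m * π) := by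
    intro m hm
    rw [hS]
    have h1 : |Real.sin (m * b) - Real.sin (m * a)| ≤ 2 := by
      have b1 := Real.neg_one_le_sin (m * b)
      have b2 := Real.sin_le_one (m * b)
      have b3 := Real.neg_one_le_sin (m * a)
      have b4 := Real.sin_le_one (m * a)
      rw [abs_le]; constructor <;> linarith
    simp only []
    rw [abs_mul, abs_mul]
    rw [abs_of_pos (show (0:ℝ) < lam / (2*π) by positivity),
        abs_of_pos (show (0:ℝ) < 2 / m by positivity)]
    calc lam / (2 * π) * (2 / m * |Real.sin (m * b) - Real.sin (m * a)|)
        ≤ lam / (2 * π) * (2 / m * 2) := by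
          apply mul_le_mul_of_nonneg_left _ (by positivity)
          exact mul_le_mul_of_nonneg_left h1 (by positivity)
      _ = 2 * lam / (m * π) := by
          have hmne : m ≠ 0 := ne_of_gt hm
          have hpne : π ≠ 0 := ne_of_gt hpi
          field_simp
  have hb1 : |S (k:ℝ)| ≤ 2 / π := by
    refine (hbnd _ hk0).trans ?_
    rw [div_le_div_iff₀ (by positivity) hpi]
    nlinarith
  have hb2 : |S (2 * (k:ℝ))| ≤ 1 / π := by
    refine (hbnd _ (by positivity)).trans ?_
    rw [div_le_div_iff₀ (by positivity) hpi]
    nlinarith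
  have h1' : -(1/π) ≤ S (2 * (k:ℝ)) := by linarith [(abs_le.mp hb2).1]
  have h2' : (S (k:ℝ))^2 ≤ (2/π)^2 := by
    have := sq_abs (S (k:ℝ))
    nlinarith [abs_nonneg (S (k:ℝ)), sq_nonneg (|S (k:ℝ)| - 2/π)]
  refine ⟨k, S (2 * (k:ℝ)) + 2 - (S (k:ℝ))^2, ?_, ?_⟩
  · linarith
  · rw [hmov1, hmov2]
    push_cast
    ring

end
end

section
/- For λ ∈ [1,∞), τ = e^{iθ} ∈ T, and k ∈ ℕ, with φ(e^{ix}) = e^{ikx} + e^{−ikx}, the moving average satisfies δ_{λ,τ}(φ²) − δ_{λ,τ}(φ)² = 2cos(2kθ)(sinc(2kπ/λ) − sinc(kπ/λ)²) + 2 − 2 sinc(kπ/λ)², where sinc(x) = sin(x)/x. -/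
open MeasureTheory Real

noncomputable section

/-- `sinc x = sin x / x` for `x ≠ 0`, and `sinc 0 = 1`. -/
def sinc (x : ℝ) : ℝ := if x = 0 then 1 else Real.sin x / x

/-! On the circle, `φ = 2 cos (k x)` and `φ² = 2 cos (2k x) + 2` are trigonometric polynomials,
and the average of `cos (c x)` over an interval of half-length `h` centred at `θ` is
`cos (c θ) · sinc (c h)`. Hence `δ(φ) = 2 cos (kθ) sinc (kπ/λ)` and
`δ(φ²) = 2 cos (2kθ) sinc (2kπ/λ) + 2`, and the identity follows from
`4 cos² (kθ) = 2 cos (2kθ) + 2`. -/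

theorem sinc_eq_real_sinc : _root_.sinc = Real.sinc := rfl

theorem integral_cos_mul_symm (c θ h : ℝ) :
    ∫ x in (θ - h)..(θ + h), Real.cos (c * x) = 2 * h * Real.cos (c * θ) * Real.sinc (c * h) := by
  rcases eq_or_ne c 0 with rfl | hc
  · simp only [zero_mul, cos_zero, intervalIntegral.integral_const, add_sub_sub_cancel,
      smul_eq_mul, mul_one, sinc_zero]
    ring
  rcases eq_or_ne h 0 with rfl | hh
  · simp
  rw [intervalIntegral.integral_comp_mul_left (fun x => Real.cos x) hc, integral_cos,
    Real.sinc_of_ne_zero (mul_ne_zero hc hh), mul_add, mul_sub, Real.sin_add, Real.sin_sub,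
    smul_eq_mul]
  field_simp
  ring

theorem movAvg_const_mul (c : ℂ) (f : ℝ → ℂ) (lam θ : ℝ) :
    movAvg (fun x => c * f x) lam θ = c * movAvg f lam θ := by
  simp only [movAvg, intervalIntegral.integral_const_mul]
  ring

theorem movAvg_add {f g : ℝ → ℂ} {lam θ : ℝ}
    (hf : IntervalIntegrable f volume (θ - π / lam) (θ + π / lam))
    (hg : IntervalIntegrable g volume (θ - π / lam) (θ + π / lam)) :
    movAvg (f + g) lam θ = movAvg f lam θ + movAvg g lam θ := by
  simp only [movAvg, Pi.add_apply, intervalIntegral.integral_add hf hg, mul_add]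

theorem movAvg_const (c : ℂ) (θ : ℝ) {lam : ℝ} (hlam : lam ≠ 0) :
    movAvg (fun _ => c) lam θ = c := by
  have : (lam : ℂ) ≠ 0 := by exact_mod_cast hlam
  simp only [movAvg, intervalIntegral.integral_const, Complex.real_smul]
  push_cast
  field_simp
  ring

theorem movAvg_cos_mul (c θ : ℝ) {lam : ℝ} (hlam : lam ≠ 0) :
    movAvg (fun x => (Real.cos (c * x) : ℂ)) lam θ
      = (Real.cos (c * θ) * _root_.sinc (c * π / lam) : ℝ) := by
  rw [movAvg, intervalIntegral.integral_ofReal, integral_cos_mul_symm, sinc_eq_real_sinc,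
    mul_div_assoc]
  have : (lam : ℂ) ≠ 0 := by exact_mod_cast hlam
  push_cast
  field_simp

theorem phiK_eq_two_mul_cos (k : ℕ) : phiK k = fun x => 2 * (Real.cos (k * x) : ℂ) := by
  ext x
  rw [phiK, Complex.ofReal_cos, Complex.two_cos]
  push_cast
  ring_nf

theorem phiK_mul_self (k : ℕ) :
    phiK k * phiK k = (fun x => 2 * (Real.cos (2 * k * x) : ℂ)) + fun _ => 2 := by
  ext x
  simp only [phiK_eq_two_mul_cos, Pi.mul_apply, Pi.add_apply, mul_assoc, Real.cos_two_mul]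
  push_cast
  ring

/-- For `λ ∈ [1,∞)`, `τ = e^{iθ}`, `k ∈ ℕ`, and `φ(e^{ix}) = e^{ikx} + e^{-ikx}`, one has
`δ_{λ,τ}(φ²) - δ_{λ,τ}(φ)²
  = 2cos(2kθ)(sinc(2kπ/λ) - sinc(kπ/λ)²) + 2 - 2 sinc(kπ/λ)²`. -/
theorem movAvg_phi_identity (lam θ : ℝ) (hlam : 1 ≤ lam) (k : ℕ) :
    movAvg (phiK k * phiK k) lam θ - (movAvg (phiK k) lam θ) ^ 2 =
      ((2 * Real.cos (2 * k * θ) * (_root_.sinc (2 * k * π / lam) - (_root_.sinc (k * π / lam)) ^ 2)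
        + 2 - 2 * (_root_.sinc (k * π / lam)) ^ 2 : ℝ) : ℂ) := by
  have hlam0 : lam ≠ 0 := by positivity
  have hcos : Continuous fun x => 2 * (Real.cos (2 * k * x) : ℂ) := by fun_prop
  rw [phiK_mul_self, movAvg_add (hcos.intervalIntegrable _ _) intervalIntegrable_const,
    movAvg_const _ _ hlam0, phiK_eq_two_mul_cos, movAvg_const_mul, movAvg_const_mul,
    movAvg_cos_mul _ _ hlam0, movAvg_cos_mul _ _ hlam0, mul_assoc (2 : ℝ) k θ, Real.cos_two_mul, mul_assoc (2 : ℝ) k π]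
  push_cast
  ring
end
end

section
/- Let A be a commutative unital C*-algebra, B a unital C*-subalgebra, and β ∈ M(B). Let J_β be the smallest closed ideal of A containing {b ∈ B : β(b) = 0}. Then J_β = {a ∈ A : â vanishes on the fiber M_β(A)}, where â is the Gelfand transform of a, and the quotient A/J_β is *-isomorphic to C(M_β(A)) via a + J_β ↦ â|_{M_β(A)}. -/
open WeakDual

/-- Let `A` be a commutative unital C*-algebra, `B` a closed unital C*-subalgebra and
`β ∈ M(B)`. Let `J_β` be the smallest closed ideal of `A` containing
`{b ∈ B : β(b) = 0}`, i.e. the closure of the ideal generated by this set. Then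
`J_β = {a ∈ A : â vanishes on the fiber M_β(A)}`, and `A/J_β ≅ C(M_β(A))` via
`a + J_β ↦ â|_{M_β(A)}`; the latter is expressed by saying that the Gelfand-type map
`Φ : A → C(M_β(A))`, `Φ(a)(α) = α(a)`, is a surjective star algebra homomorphism whose
kernel is exactly `J_β`. -/
theorem local_ideal_and_quotient
    (A : Type*) [NormedCommRing A] [NormedAlgebra ℂ A] [StarRing A] [CStarRing A]
    [StarModule ℂ A] [CompleteSpace A]
    (B : StarSubalgebra ℂ A) (hB : IsClosed (B : Set A))
    (β : characterSpace ℂ B) :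
    (closure (Ideal.span {a : A | ∃ h : a ∈ B, β ⟨a, h⟩ = 0} : Set A)
        = {a : A | ∀ α : {α : characterSpace ℂ A // ∀ b : B, α (b : A) = β b},
            (α : characterSpace ℂ A) a = 0}) ∧
    ∃ Φ : A →⋆ₐ[ℂ] C({α : characterSpace ℂ A // ∀ b : B, α (b : A) = β b}, ℂ),
      (∀ (a : A) (α : {α : characterSpace ℂ A // ∀ b : B, α (b : A) = β b}),
        Φ a α = (α : characterSpace ℂ A) a) ∧
      Function.Surjective Φ ∧
      (∀ a : A, Φ a = 0 ↔
        a ∈ closure (Ideal.span {a : A | ∃ h : a ∈ B, β ⟨a, h⟩ = 0} : Set A)) := by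
  letI : CommCStarAlgebra A :=
    { ‹NormedCommRing A›, ‹NormedAlgebra ℂ A›, ‹StarRing A›, ‹CStarRing A›,
      ‹StarModule ℂ A›, ‹CompleteSpace A› with }
  set X := characterSpace ℂ A with hX
  set S : Set A := {a : A | ∃ h : a ∈ B, β ⟨a, h⟩ = 0} with hS
  set F : Set X := {α : X | ∀ b : B, α (b : A) = β b} with hF
  let g : A ≃⋆ₐ[ℂ] C(X, ℂ) := gelfandStarTransform A
  have hgapp : ∀ (a : A) (x : X), g a x = x a := fun a x => rfl
  have hgiso : Isometry ⇑g := gelfandTransform_isometry A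
  -- fiber characterization
  have hmemF : ∀ α : X, α ∈ F ↔ ∀ s ∈ S, α s = 0 := by
    intro α
    constructor
    · rintro hα s ⟨hs, hβ⟩
      have := hα ⟨s, hs⟩
      rw [this, hβ]
    · intro h b
      have hmem : ((b : A) - β b • (1 : A)) ∈ B :=
        B.sub_mem b.2 (B.smul_mem B.one_mem _)
      have hSm : ((b : A) - β b • (1 : A)) ∈ S := by
        refine ⟨hmem, ?_⟩
        have : (⟨(b : A) - β b • (1 : A), hmem⟩ : B) = b - β b • (1 : B) := by
          apply Subtype.ext
          simp
        rw [this]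
        simp [map_sub, map_smul]
      have h0 := h _ hSm
      have : α ((b : A) - β b • (1 : A)) = α (b : A) - β b := by
        simp [map_sub, map_smul]
      rw [this, sub_eq_zero] at h0
      exact h0
  -- F is closed
  have hFclosed : IsClosed F := by
    have : F = ⋂ b : B, {α : X | α (b : A) = β b} := by
      ext α; simp [hF, Set.mem_iInter]
    rw [this]
    refine isClosed_iInter fun b => ?_
    exact isClosed_eq
      ((WeakDual.eval_continuous ((b : A))).comp continuous_subtype_val) continuous_const
  -- ring hom version of g
  let gh : A →+* C(X, ℂ) := (g : A ≃+* C(X, ℂ))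
  have hghsurj : Function.Surjective gh := (g : A ≃+* C(X, ℂ)).surjective
  have hghapp : ∀ a, gh a = g a := fun a => rfl
  -- the hull of the pushed-forward ideal is exactly `Fᶜ`
  have hset : ContinuousMap.setOfIdeal (Ideal.span (⇑g '' S)) = Fᶜ := by
    ext x
    rw [ContinuousMap.mem_setOfIdeal]
    constructor
    · rintro ⟨f, hfI, hfx⟩ hxF
      refine hfx ?_
      have hle : Ideal.span (⇑g '' S) ≤ ContinuousMap.idealOfSet ℂ ({x}ᶜ) := by
        rw [Ideal.span_le]
        rintro - ⟨s, hsS, rfl⟩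
        rw [SetLike.mem_coe, ContinuousMap.mem_idealOfSet_compl_singleton, hgapp]
        exact (hmemF x).mp hxF s hsS
      exact (ContinuousMap.mem_idealOfSet_compl_singleton x f).mp (hle hfI)
    · intro hx
      rw [Set.mem_compl_iff, hmemF] at hx
      push_neg at hx
      obtain ⟨s, hsS, hsx⟩ := hx
      exact ⟨g s, Ideal.subset_span ⟨s, hsS, rfl⟩, by rwa [hgapp]⟩
  -- the closure of the pushed-forward ideal is the vanishing ideal of `F`
  have hclosure : closure ((Ideal.span (⇑g '' S) : Ideal C(X, ℂ)) : Set C(X, ℂ))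
      = {f : C(X, ℂ) | ∀ x ∈ F, f x = 0} := by
    have h1 := ContinuousMap.idealOfSet_ofIdeal_eq_closure (Ideal.span (⇑g '' S))
    rw [hset] at h1
    ext f
    have h2 : f ∈ closure ((Ideal.span (⇑g '' S) : Ideal C(X, ℂ)) : Set C(X, ℂ))
        ↔ f ∈ (Ideal.span (⇑g '' S)).closure := by
      rw [← Ideal.coe_closure]; rfl
    rw [Set.mem_setOf_eq, h2, ← h1, ContinuousMap.mem_idealOfSet]
    simp only [compl_compl]
  -- pushing forward the span
  have himg : ⇑g '' ((Ideal.span S : Ideal A) : Set A)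
      = ((Ideal.span (⇑g '' S) : Ideal C(X, ℂ)) : Set C(X, ℂ)) := by
    ext f
    constructor
    · rintro ⟨a, ha, rfl⟩
      have : gh a ∈ Ideal.map gh (Ideal.span S) := Ideal.mem_map_of_mem gh ha
      rwa [Ideal.map_span] at this
    · intro hf
      have : f ∈ Ideal.map gh (Ideal.span S) := by rwa [Ideal.map_span]
      obtain ⟨a, ha, rfl⟩ := (Ideal.mem_map_iff_of_surjective gh hghsurj).mp this
      exact ⟨a, ha, rfl⟩
  -- the main set equality
  have main : closure ((Ideal.span S : Ideal A) : Set A)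
      = {a : A | ∀ α : {α : X // ∀ b : B, α (b : A) = β b}, (α : X) a = 0} := by
    ext a
    have h1 : a ∈ closure ((Ideal.span S : Ideal A) : Set A)
        ↔ g a ∈ closure (⇑g '' ((Ideal.span S : Ideal A) : Set A)) := by
      rw [(hgiso.isClosedEmbedding).closure_image_eq]
      exact ⟨fun h => Set.mem_image_of_mem _ h,
        fun ⟨b, hb, hba⟩ => hgiso.injective hba ▸ hb⟩
    rw [h1, himg, hclosure]
    simp only [Set.mem_setOf_eq]
    constructor
    · intro h α
      have := h (α : X) α.2
      rwa [hgapp] at this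
    · intro h x hx
      rw [hgapp]
      exact h ⟨x, hx⟩
  refine ⟨main, ?_⟩
  -- the Gelfand-type map Φ
  let ι : C({α : X // ∀ b : B, α (b : A) = β b}, X) := ⟨Subtype.val, continuous_subtype_val⟩
  refine ⟨(ContinuousMap.compStarAlgHom' ℂ ℂ ι).comp (g : A →⋆ₐ[ℂ] C(X, ℂ)), fun a α => rfl,
    ?_, ?_⟩
  · -- surjectivity via Tietze extension
    intro f
    obtain ⟨h, hh⟩ := ContinuousMap.exists_restrict_eq (Y := ℂ) hFclosed f
    refine ⟨g.symm h, ?_⟩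
    ext α
    show (g (g.symm h)) (α : X) = f α
    rw [g.apply_symm_apply]
    exact DFunLike.congr_fun hh α
  · -- kernel
    intro a
    rw [main]
    constructor
    · intro h0 α
      exact DFunLike.congr_fun h0 α
    · intro ha
      ext α
      exact ha α
end
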